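/- arXiv:1111.2642 — 5 statements merged into one kernel-verified Lean document; each statement's English description precedes it below -/
import Mathlib

section
/- Let E be a finite set and let I ⊆ 2^E be a constructible family. Then there exists a simplicial complex I' ⊆ 2^E that is a constructible family whose rank function coincides with the rank function of I. -/
open Finset

variable {α : Type*} [DecidableEq α] [Fintype α]

/-- Extreme-point operator: `ex I J = {e ∈ J : J \ {e} ∈ I}`. -/
def ex (I : Finset (Finset α)) (J : Finset α) : Finset α :=
  J.filter (fun e => J.erase e ∈ I)

/-- Co-extreme-point operator: `ex* I J = {e ∈ E \ J : J ∪ {e} ∈ I}`. -/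
def coext (I : Finset (Finset α)) (J : Finset α) : Finset α :=
  (Finset.univ \ J).filter (fun e => insert e J ∈ I)

/-- A nonempty family is constructible if `ex I J ≠ ∅` for all nonempty `J ∈ I`. -/
def Constructible (I : Finset (Finset α)) : Prop :=
  I.Nonempty ∧ ∀ J ∈ I, J ≠ ∅ → ex I J ≠ ∅

/-- Rank function of a family: `ρ(X) = max_{J ∈ I} |X ∩ J|`. -/
def rnk (I : Finset (Finset α)) (X : Finset α) : ℕ :=
  I.sup fun J => (X ∩ J).card

/-- A base of `I` is a member with empty co-extreme-point set. -/
def IsBase (I : Finset (Finset α)) (J : Finset α) : Prop :=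
  J ∈ I ∧ coext I J = ∅

/-- `J` is a maximal element of `I` w.r.t. set inclusion. -/
def MaxMem (I : Finset (Finset α)) (J : Finset α) : Prop :=
  J ∈ I ∧ ∀ K ∈ I, J ⊆ K → J = K

/-- A simplicial complex: downward closed family. -/
def IsSimplicialComplex (I : Finset (Finset α)) : Prop :=
  ∀ X J : Finset α, X ⊆ J → J ∈ I → X ∈ I

/-- Restriction of `I` to `A`: `{J ∈ I : J ⊆ A}`. -/
def restr (I : Finset (Finset α)) (A : Finset α) : Finset (Finset α) :=
  I.filter (· ⊆ A)

/-- `H`-independence system. -/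
def IsIndepSystem (H : Set (Finset α)) (I : Finset (Finset α)) : Prop :=
  Constructible I ∧ ∀ A : Finset α, A ∈ H → ∃ J ∈ restr I A, J.card = rnk I A

/-- `H`-matroid. -/
def IsHMatroid (H : Set (Finset α)) (I : Finset (Finset α)) : Prop :=
  IsIndepSystem H I ∧
    ∀ A : Finset α, A ∈ H → ∀ B : Finset α, IsBase (restr I A) B → B.card = rnk I A

/-- Unit-increase property for a set function. -/
def UnitIncreasing (ρ : Finset α → ℕ) : Prop :=
  ∀ X Y : Finset α, X ⊆ Y → ρ X ≤ ρ Y ∧ ρ Y ≤ ρ X + (Y \ X).card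

/-- `H`-extension property. -/
def ExtensionProperty (H : Set (Finset α)) (ρ : Finset α → ℕ) : Prop :=
  ∀ X A : Finset α, A ∈ H → X ⊆ A → ρ X = X.card → ρ X < ρ A →
    ∃ e ∈ A \ X, ρ (insert e X) = ρ X + 1

theorem stmt_9 {α : Type*} [DecidableEq α] [Fintype α]
    (I : Finset (Finset α)) (hI : Constructible I) :
    ∃ I' : Finset (Finset α), IsSimplicialComplex I' ∧ Constructible I' ∧
      ∀ X : Finset α, rnk I' X = rnk I X := by
  classical
  refine ⟨Finset.univ.filter (fun J => ∃ K ∈ I, J ⊆ K), ?_, ?_, ?_⟩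
  · intro X J hXJ hJ
    simp only [Finset.mem_filter, Finset.mem_univ, true_and] at hJ ⊢
    obtain ⟨K, hK, hJK⟩ := hJ
    exact ⟨K, hK, hXJ.trans hJK⟩
  · constructor
    · obtain ⟨K, hK⟩ := hI.1
      exact ⟨∅, Finset.mem_filter.mpr ⟨Finset.mem_univ _, K, hK, Finset.empty_subset K⟩⟩
    · intro J hJ hJne
      obtain ⟨e, he⟩ := Finset.nonempty_iff_ne_empty.mpr hJne
      simp only [Finset.mem_filter, Finset.mem_univ, true_and] at hJ
      obtain ⟨K, hK, hJK⟩ := hJ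
      rw [← Finset.nonempty_iff_ne_empty]
      refine ⟨e, ?_⟩
      simp only [ex, Finset.mem_filter, Finset.mem_univ, true_and]
      exact ⟨he, K, hK, (Finset.erase_subset e J).trans hJK⟩
  · intro X
    apply le_antisymm
    · apply Finset.sup_le
      intro J hJ
      simp only [Finset.mem_filter, Finset.mem_univ, true_and] at hJ
      obtain ⟨K, hK, hJK⟩ := hJ
      calc (X ∩ J).card ≤ (X ∩ K).card :=
            Finset.card_le_card (Finset.inter_subset_inter_left hJK)
        _ ≤ rnk I X := Finset.le_sup (f := fun J => (X ∩ J).card) hK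
    · apply Finset.sup_le
      intro J hJ
      exact Finset.le_sup (f := fun J => (X ∩ J).card)
        (Finset.mem_filter.mpr ⟨Finset.mem_univ _, J, hJ, Finset.Subset.refl J⟩)
end

section
/- Let E be a finite set, let H be a family of subsets of E with ∅, E ∈ H, and let (E, I) be an H-matroid such that I is a simplicial complex, with rank function ρ. Then ρ satisfies the H-extension property: for X ∈ 2^E and H ∈ H with X ⊆ H, if ρ(X) = |X| < ρ(H), then there exists e ∈ H \ X such that ρ(X ∪ {e}) = ρ(X) + 1. -/
open Finset

variable {α : Type*} [DecidableEq α] [Fintype α]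

theorem stmt_10 {α : Type*} [DecidableEq α] [Fintype α]
    (H : Set (Finset α)) (hH0 : ∅ ∈ H) (hHE : Finset.univ ∈ H)
    (I : Finset (Finset α)) (hM : IsHMatroid H I) (hsc : IsSimplicialComplex I) :
    ExtensionProperty H (rnk I) := by
  rintro X A hA hXA hrX hlt
  obtain ⟨⟨⟨hne, _⟩, _⟩, hbase⟩ := hM
  -- X ∈ I
  obtain ⟨J, hJ, hJeq⟩ := Finset.exists_mem_eq_sup I hne (fun J => (X ∩ J).card)
  have hcard : (X ∩ J).card = X.card := by
    have : rnk I X = (X ∩ J).card := hJeq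
    omega
  have hXJ : X ⊆ J := by
    have := Finset.eq_of_subset_of_card_le (Finset.inter_subset_left)
      (le_of_eq hcard.symm)
    exact Finset.inter_eq_left.mp this
  have hXI : X ∈ I := hsc X J hXJ hJ
  have hXr : X ∈ restr I A := Finset.mem_filter.mpr ⟨hXI, hXA⟩
  -- X is not a base of restr I A
  have hco : coext (restr I A) X ≠ ∅ := by
    intro h
    have := hbase A hA X ⟨hXr, h⟩
    omega
  obtain ⟨e, he⟩ := Finset.nonempty_iff_ne_empty.mpr hco
  rw [coext, Finset.mem_filter, Finset.mem_sdiff] at he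
  obtain ⟨⟨-, heX⟩, heI⟩ := he
  rw [restr, Finset.mem_filter] at heI
  obtain ⟨heI, heA⟩ := heI
  have heAmem : e ∈ A := heA (Finset.mem_insert_self e X)
  refine ⟨e, Finset.mem_sdiff.mpr ⟨heAmem, heX⟩, ?_⟩
  have hlow : rnk I X + 1 ≤ rnk I (insert e X) := by
    have := Finset.le_sup (f := fun J => (insert e X ∩ J).card) heI
    simp only [Finset.inter_self] at this
    rw [Finset.card_insert_of_notMem heX] at this
    rw [hrX]
    exact this
  have hhigh : rnk I (insert e X) ≤ rnk I X + 1 := by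
    apply Finset.sup_le
    intro K hK
    have h1 : insert e X ∩ K ⊆ insert e (X ∩ K) := by
      intro x hx
      rw [Finset.mem_inter, Finset.mem_insert] at hx
      rcases hx with ⟨hx1 | hx1, hx2⟩
      · subst hx1; exact Finset.mem_insert_self _ _
      · exact Finset.mem_insert_of_mem (Finset.mem_inter.mpr ⟨hx1, hx2⟩)
    calc (insert e X ∩ K).card ≤ (insert e (X ∩ K)).card := Finset.card_le_card h1
      _ ≤ (X ∩ K).card + 1 := Finset.card_insert_le _ _
      _ ≤ rnk I X + 1 := by
          have h2 := Finset.le_sup (f := fun J => (X ∩ J).card) hK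
          omega
  omega
end

section
/- Let E be a finite set, let H ⊆ 2^E be a family with ∅, E ∈ H, and let ρ: 2^E → ℤ≥0 be a normalized unit-increasing set function satisfying the H-extension property. Define I_ρ := {X ∈ 2^E : ρ(X) = |X|}. Then I_ρ is a simplicial complex and (E, I_ρ) is an H-matroid. -/
open Finset

variable {α : Type*} [DecidableEq α] [Fintype α]

theorem stmt_11 {α : Type*} [DecidableEq α] [Fintype α]
    (H : Set (Finset α)) (hH0 : ∅ ∈ H) (hHE : Finset.univ ∈ H)
    (ρ : Finset α → ℕ) (hnorm : ρ ∅ = 0) (hui : UnitIncreasing ρ)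
    (hext : ExtensionProperty H ρ) :
    IsSimplicialComplex
        ((Finset.univ : Finset (Finset α)).filter (fun X => ρ X = X.card)) ∧
      IsHMatroid H ((Finset.univ : Finset (Finset α)).filter (fun X => ρ X = X.card)) := by

  set I := (Finset.univ : Finset (Finset α)).filter (fun X => ρ X = X.card) with hI
  have hmem : ∀ X : Finset α, X ∈ I ↔ ρ X = X.card := by
    intro X; simp [hI]
  have hle : ∀ X : Finset α, ρ X ≤ X.card := by
    intro X
    have := (hui ∅ X (by simp)).2
    simpa [hnorm] using this
  have hsc : IsSimplicialComplex I := by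
    intro X J hXJ hJ
    rw [hmem] at hJ ⊢
    have h1 := (hui X J hXJ).2
    have h2 := hle X
    have hcard : (J \ X).card = J.card - X.card := card_sdiff_of_subset hXJ
    have hXle : X.card ≤ J.card := card_le_card hXJ
    omega
  have hmono : ∀ X Y : Finset α, X ⊆ Y → ρ X ≤ ρ Y := fun X Y h => (hui X Y h).1
  have hrnk_le : ∀ A : Finset α, rnk I A ≤ ρ A := by
    intro A
    apply Finset.sup_le
    intro J hJ
    have hJI : A ∩ J ∈ I := hsc _ J inter_subset_right hJ
    rw [hmem] at hJI
    rw [← hJI]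
    exact hmono _ _ inter_subset_left
  have hrnk_ge : ∀ X A : Finset α, X ∈ I → X ⊆ A → X.card ≤ rnk I A := by
    intro X A hX hXA
    have h : (A ∩ X).card = X.card := by rw [inter_eq_right.mpr hXA]
    calc X.card = (A ∩ X).card := h.symm
      _ ≤ rnk I A := Finset.le_sup (f := fun J => (A ∩ J).card) hX
  have hchain : ∀ (n : ℕ) (X A : Finset α), A ∈ H → X ⊆ A → X ∈ I → ρ A - X.card ≤ n →
      ∃ J, X ⊆ J ∧ J ⊆ A ∧ J ∈ I ∧ J.card = ρ A := by
    intro n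
    induction n with
    | zero =>
      intro X A hA hXA hX h
      refine ⟨X, subset_refl _, hXA, hX, ?_⟩
      have h2 := hmono X A hXA
      rw [hmem] at hX
      omega
    | succ n ih =>
      intro X A hA hXA hX h
      rw [hmem] at hX
      by_cases hlt : ρ X < ρ A
      · obtain ⟨e, he, hρ⟩ := hext X A hA hXA hX hlt
        rw [mem_sdiff] at he
        have heX : e ∉ X := he.2
        have hins : insert e X ∈ I := by
          rw [hmem, hρ, card_insert_of_notMem heX]; omega
        obtain ⟨J, hJ1, hJ2, hJ3, hJ4⟩ := ih (insert e X) A hA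
          (insert_subset he.1 hXA) hins (by rw [card_insert_of_notMem heX]; omega)
        exact ⟨J, (subset_insert _ _).trans hJ1, hJ2, hJ3, hJ4⟩
      · have h2 := hmono X A hXA
        exact ⟨X, subset_refl _, hXA, by rw [hmem]; exact hX, by omega⟩
  have hempty : (∅ : Finset α) ∈ I := by rw [hmem]; simp [hnorm]
  have hrnk_eq : ∀ A : Finset α, A ∈ H → rnk I A = ρ A := by
    intro A hA
    refine le_antisymm (hrnk_le A) ?_
    obtain ⟨J, _, hJA, hJI, hJc⟩ := hchain (ρ A) ∅ A hA (empty_subset _) hempty (by simp)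
    rw [← hJc]
    exact hrnk_ge J A hJI hJA
  have hcon : Constructible I := by
    refine ⟨⟨∅, hempty⟩, ?_⟩
    intro J hJ hJne
    obtain ⟨e, he⟩ := nonempty_iff_ne_empty.mpr hJne
    intro hex
    have : e ∈ ex I J := by
      rw [ex, mem_filter]
      exact ⟨he, hsc _ J (erase_subset _ _) hJ⟩
    rw [hex] at this
    exact absurd this (notMem_empty e)
  refine ⟨hsc, ⟨hcon, ?_⟩, ?_⟩
  · intro A hA
    obtain ⟨J, _, hJA, hJI, hJc⟩ := hchain (ρ A) ∅ A hA (empty_subset _) hempty (by simp)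
    refine ⟨J, ?_, ?_⟩
    · rw [restr, mem_filter]; exact ⟨hJI, hJA⟩
    · rw [hrnk_eq A hA]; exact hJc
  · intro A hA B hB
    obtain ⟨hB1, hB2⟩ := hB
    rw [restr, mem_filter] at hB1
    obtain ⟨hBI, hBA⟩ := hB1
    rw [hrnk_eq A hA]
    have hρB := (hmem B).mp hBI
    by_contra hne
    have hlt : ρ B < ρ A := by
      have := hmono B A hBA
      omega
    obtain ⟨e, he, hρ⟩ := hext B A hA hBA hρB hlt
    rw [mem_sdiff] at he
    have heB : e ∉ B := he.2
    have hins : insert e B ∈ restr I A := by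
      rw [restr, mem_filter, hmem, hρ, card_insert_of_notMem heB]
      exact ⟨by omega, insert_subset he.1 hBA⟩
    have : e ∈ coext (restr I A) B := by
      rw [coext, mem_filter, mem_sdiff]
      exact ⟨⟨mem_univ e, heB⟩, hins⟩
    rw [hB2] at this
    exact absurd this (notMem_empty e)
end

section
/- Let E be a finite set, let H be a family of subsets of E with ∅, E ∈ H, and let M = (E, I) be an H-matroid with rank function ρ. Then for all H1, H2, G1, G2 ∈ H with H1 ⊆ H2, if H1 ⊆ G1 ∩ G2 and H2 ⊆ G1 ∪ G2, then ρ(H1) + ρ(H2) ≤ ρ(G1) + ρ(G2). -/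
open Finset

variable {α : Type*} [DecidableEq α] [Fintype α]

theorem exists_base_superset {α : Type*} [DecidableEq α] [Fintype α]
    (J : Finset (Finset α)) (B : Finset α) (hB : B ∈ J) :
    ∃ B2, B ⊆ B2 ∧ IsBase J B2 := by
  generalize hn : Fintype.card α - B.card = n
  induction n generalizing B with
  | zero =>
    refine ⟨B, subset_rfl, hB, ?_⟩
    have hBu : B = Finset.univ := Finset.eq_univ_of_card _ (by
      have := Finset.card_le_univ B
      omega)
    ext e
    simp [coext, hBu]
  | succ n ih =>
    by_cases hc : coext J B = ∅
    · exact ⟨B, subset_rfl, hB, hc⟩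
    · obtain ⟨e, he⟩ := Finset.nonempty_iff_ne_empty.mpr hc
      simp only [coext, Finset.mem_filter, Finset.mem_sdiff, Finset.mem_univ,
        true_and] at he
      obtain ⟨heB, heI⟩ := he
      have hcard : (insert e B).card = B.card + 1 := Finset.card_insert_of_notMem heB
      obtain ⟨B2, hsub, hbase⟩ := ih (insert e B) heI (by
        have := Finset.card_le_univ (insert e B)
        omega)
      exact ⟨B2, (Finset.subset_insert e B).trans hsub, hbase⟩

theorem stmt_14 {α : Type*} [DecidableEq α] [Fintype α]
    (H : Set (Finset α)) (hH0 : ∅ ∈ H) (hHE : Finset.univ ∈ H)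
    (I : Finset (Finset α)) (hM : IsHMatroid H I) :
    ∀ H1 H2 G1 G2 : Finset α, H1 ∈ H → H2 ∈ H → G1 ∈ H → G2 ∈ H →
      H1 ⊆ H2 → H1 ⊆ G1 ∩ G2 → H2 ⊆ G1 ∪ G2 →
      rnk I H1 + rnk I H2 ≤ rnk I G1 + rnk I G2 := by
  intro H1 H2 G1 G2 h1 h2 hg1 hg2 h12 hG12 hG12'
  obtain ⟨⟨hcon, hindep⟩, hbase⟩ := hM
  obtain ⟨B, hBr, hBcard⟩ := hindep H1 h1
  rw [restr, Finset.mem_filter] at hBr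
  obtain ⟨hBI, hBH1⟩ := hBr
  have hBr2 : B ∈ restr I H2 := by
    rw [restr, Finset.mem_filter]; exact ⟨hBI, hBH1.trans h12⟩
  obtain ⟨B2, hBB2, hB2base⟩ := exists_base_superset (restr I H2) B hBr2
  have hB2card : B2.card = rnk I H2 := hbase H2 h2 B2 hB2base
  have hB2r : B2 ∈ restr I H2 := hB2base.1
  rw [restr, Finset.mem_filter] at hB2r
  obtain ⟨hB2I, hB2H2⟩ := hB2r
  -- B ⊆ G1 and B ⊆ G2
  have hBG1 : B ⊆ G1 := fun x hx => (Finset.mem_inter.mp (hG12 (hBH1 hx))).1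
  have hBG2 : B ⊆ G2 := fun x hx => (Finset.mem_inter.mp (hG12 (hBH1 hx))).2
  set C := B2 \ B with hC
  have hsplit : B2.card = C.card + B.card := by
    rw [hC]; exact (Finset.card_sdiff_add_card_eq_card hBB2).symm
  -- rnk G1 ≥ |B| + |C ∩ G1|
  have key : ∀ G : Finset α, B ⊆ G → B.card + (C ∩ G).card ≤ rnk I G := by
    intro G hBG
    have hsub : B ∪ (C ∩ G) ⊆ G ∩ B2 := by
      intro x hx
      rcases Finset.mem_union.mp hx with hx | hx
      · exact Finset.mem_inter.mpr ⟨hBG hx, hBB2 hx⟩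
      · rw [Finset.mem_inter] at hx
        exact Finset.mem_inter.mpr ⟨hx.2, (Finset.mem_sdiff.mp hx.1).1⟩
    have hdisj : Disjoint B (C ∩ G) := by
      apply Finset.disjoint_left.mpr
      intro x hx hx'
      exact (Finset.mem_sdiff.mp (Finset.mem_inter.mp hx').1).2 hx
    calc B.card + (C ∩ G).card = (B ∪ (C ∩ G)).card :=
          (Finset.card_union_of_disjoint hdisj).symm
      _ ≤ (G ∩ B2).card := Finset.card_le_card hsub
      _ ≤ rnk I G := Finset.le_sup (f := fun J => (G ∩ J).card) hB2I
  have k1 := key G1 hBG1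
  have k2 := key G2 hBG2
  -- |C ∩ G1| + |C ∩ G2| ≥ |C|
  have hCcov : C ⊆ (C ∩ G1) ∪ (C ∩ G2) := by
    intro x hx
    have hxH2 : x ∈ G1 ∪ G2 := hG12' (hB2H2 (Finset.mem_sdiff.mp hx).1)
    rcases Finset.mem_union.mp hxH2 with h | h
    · exact Finset.mem_union_left _ (Finset.mem_inter.mpr ⟨hx, h⟩)
    · exact Finset.mem_union_right _ (Finset.mem_inter.mpr ⟨hx, h⟩)
  have hCcard : C.card ≤ (C ∩ G1).card + (C ∩ G2).card :=
    (Finset.card_le_card hCcov).trans (Finset.card_union_le _ _)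
  omega
end

section
/- Let E be a finite set and let f: 2^E → ℝ be a set function with f(∅) = 0. Then (E, f) is a polymatroid (i.e., f is monotone and submodular) if and only if f is H-submodular for every family H ⊆ 2^E with ∅, E ∈ H. -/
open Finset

variable {α : Type*} [DecidableEq α] [Fintype α]

/-- `H`-submodularity of a real-valued set function. -/
def HSubmodular {α : Type*} [DecidableEq α] [Fintype α]
    (H : Set (Finset α)) (f : Finset α → ℝ) : Prop :=
  ∀ X Y H1 H2 : Finset α, H1 ∈ H → H2 ∈ H → H1 ⊆ H2 → H1 ⊆ X ∩ Y → H2 ⊆ X ∪ Y →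
    f H1 + f H2 ≤ f X + f Y

theorem stmt_15 {α : Type*} [DecidableEq α] [Fintype α]
    (f : Finset α → ℝ) (hnorm : f ∅ = 0) :
    ((∀ X Y : Finset α, X ⊆ Y → f X ≤ f Y) ∧
        (∀ X Y : Finset α, f X + f Y ≥ f (X ∩ Y) + f (X ∪ Y))) ↔
      ∀ H : Set (Finset α), ∅ ∈ H → Finset.univ ∈ H → HSubmodular H f := by
  constructor
  · rintro ⟨hmono, hsub⟩ H _ _ X Y H1 H2 _ _ _ h1 h2
    have := hsub X Y
    have a1 : f H1 ≤ f (X ∩ Y) := hmono _ _ h1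
    have a2 : f H2 ≤ f (X ∪ Y) := hmono _ _ h2
    linarith
  · intro h
    have h' := h Set.univ trivial trivial
    constructor
    · intro X Y hXY
      have := h' Y Y X Y trivial trivial hXY (by simp [hXY]) (by simp)
      linarith
    · intro X Y
      have := h' X Y (X ∩ Y) (X ∪ Y) trivial trivial
        (Finset.inter_subset_union) subset_rfl subset_rfl
      linarith
end
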